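/- arXiv:0908.2926 — 4 statements merged into one kernel-verified Lean document; each statement's English description precedes it below -/
import Mathlib

section
/- Let (E, ℰ) be a measurable space, P a probability measure on E, and ξ_1, …, ξ_N (N ≥ 1) i.i.d. E-valued random variables each with law P. Let h : E → ℝ be a measurable function with osc(h) < ∞. Then for every real p ≥ 1, (E[ |(1/N) Σ_{k=1}^N h(ξ_k) − ∫_E h dP|^p ])^{1/p} ≤ c(p)^{1/p} · osc(h) / √N. -/
/-!
Each centred summand `h (ξ k) - ∫ h dP` takes values in an interval of length `osc h`, so by
Hoeffding's lemma it is sub-Gaussian with variance proxy `(osc h / 2)²`; by independence the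
error of the empirical mean is sub-Gaussian with proxy `(osc h)² / (4N)`. For a sub-Gaussian `X`
with proxy `c`, the layer-cake formula turns the two-sided Chernoff tail `2 exp (-t² / (2c))` into
`E |X|^p ≤ p Γ(p/2) (2c)^(p/2)`, which is exactly `c(p) (osc h / √N)^p` when `p > 1`. For `p = 1`
that constant is `√(π/2) > 1`; instead `E |X| ≤ (E X²)^(1/2)` together with the case `p = 2`
gives `c(1) = 1`.
-/

open MeasureTheory ProbabilityTheory Real

noncomputable def osc {E : Type*} (h : E → ℝ) : ℝ :=
  ⨆ q : E × E, |h q.1 - h q.2|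

noncomputable def cConst (p : ℝ) : ℝ :=
  if p = 1 then 1 else 2 ^ (-p / 2) * p * Real.Gamma (p / 2)

open scoped NNReal

lemma cConst_nonneg {p : ℝ} (hp : 0 ≤ p) : 0 ≤ cConst p := by
  unfold cConst
  split_ifs
  · exact zero_le_one
  · have := Gamma_nonneg_of_nonneg (by positivity : 0 ≤ p / 2)
    positivity

section Oscillation

variable {E : Type*} {h : E → ℝ}

lemma abs_sub_le_osc (hosc : BddAbove (Set.range fun q : E × E => |h q.1 - h q.2|)) (x y : E) :
    |h x - h y| ≤ osc h :=
  le_ciSup hosc (x, y)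

lemma mem_Icc_iInf_add_osc [Nonempty E]
    (hosc : BddAbove (Set.range fun q : E × E => |h q.1 - h q.2|)) (x : E) :
    h x ∈ Set.Icc (⨅ y, h y) ((⨅ y, h y) + osc h) := by
  have hbdd : BddBelow (Set.range h) := by
    obtain ⟨y⟩ := ‹Nonempty E›
    refine ⟨h y - osc h, ?_⟩
    rintro _ ⟨z, rfl⟩
    linarith [(abs_le.1 (abs_sub_le_osc hosc y z)).2]
  have hle : h x - osc h ≤ ⨅ y, h y :=
    le_ciInf fun y => by linarith [(abs_le.1 (abs_sub_le_osc hosc x y)).2]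
  exact ⟨ciInf_le hbdd x, by linarith⟩

end Oscillation

lemma integral_rpow_mul_two_mul_exp_neg_sq_div {c : ℝ≥0} {p : ℝ} (hp : 0 < p) (hc : 0 < c) :
    ∫ t in Set.Ioi (0 : ℝ), t ^ (p - 1) * (2 * exp (-t ^ 2 / (2 * c))) =
      Gamma (p / 2) * (2 * c) ^ (p / 2) := by
  have hb : (0 : ℝ) < (2 * (c : ℝ))⁻¹ := by positivity
  have hexp : ∀ t : ℝ, t ^ (p - 1) * (2 * exp (-t ^ 2 / (2 * c))) =
      2 * (t ^ (p - 1) * exp (-(2 * c : ℝ)⁻¹ * t ^ (2 : ℝ))) := fun t => by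
    rw [rpow_two]; ring_nf
  simp_rw [hexp]
  rw [integral_const_mul, integral_rpow_mul_exp_neg_mul_rpow two_pos (by linarith) hb,
    sub_add_cancel, inv_rpow (by positivity), neg_div, rpow_neg (by positivity), inv_inv]
  ring

namespace ProbabilityTheory.HasSubgaussianMGF

variable {Ω : Type*} [MeasurableSpace Ω] {μ : Measure Ω} {X : Ω → ℝ} {c : ℝ≥0}

lemma isFiniteMeasure (h : HasSubgaussianMGF X c μ) : IsFiniteMeasure μ := by
  simpa [integrable_const_iff] using h.integrable_exp_mul 0

lemma measureReal_abs_ge_le (h : HasSubgaussianMGF X c μ) {ε : ℝ} (hε : 0 ≤ ε) :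
    μ.real {ω | ε ≤ |X ω|} ≤ 2 * exp (-ε ^ 2 / (2 * c)) := by
  have hsplit : {ω | ε ≤ |X ω|} = {ω | ε ≤ X ω} ∪ {ω | ε ≤ (-X) ω} := by
    ext ω
    simp [le_abs]
  calc μ.real {ω | ε ≤ |X ω|} ≤ μ.real {ω | ε ≤ X ω} + μ.real {ω | ε ≤ (-X) ω} :=
        hsplit ▸ measureReal_union_le _ _
    _ ≤ 2 * exp (-ε ^ 2 / (2 * c)) := by
        linarith [h.measure_ge_le hε, h.neg.measure_ge_le hε]

lemma lintegral_abs_rpow_le (h : HasSubgaussianMGF X c μ) {p : ℝ} (hp : 0 < p) :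
    ∫⁻ ω, ENNReal.ofReal (|X ω| ^ p) ∂μ ≤
      ENNReal.ofReal (p * Gamma (p / 2) * (2 * c) ^ (p / 2)) := by
  rcases eq_zero_or_pos c with rfl | hc
  · have hX : X =ᵐ[μ] 0 := h.ae_eq_zero_of_hasSubgaussianMGF_zero
    rw [lintegral_congr_ae (g := fun _ => 0) (hX.mono fun ω hω => by simp [hω, zero_rpow hp.ne'])]
    simp
  have := h.isFiniteMeasure
  set g : ℝ → ℝ := fun t => t ^ (p - 1) * (2 * exp (-t ^ 2 / (2 * c)))
  have hg_int : IntegrableOn g (Set.Ioi 0) := by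
    refine IntegrableOn.congr_fun ((integrableOn_rpow_mul_exp_neg_mul_rpow (s := p - 1)
      (by linarith) two_pos (by positivity : (0 : ℝ) < (2 * (c : ℝ))⁻¹)).const_mul 2)
      (fun t _ => ?_) measurableSet_Ioi
    simp only [g, rpow_two]
    ring_nf
  have hg_nonneg : 0 ≤ᵐ[volume.restrict (Set.Ioi 0)] g := by
    filter_upwards [ae_restrict_mem measurableSet_Ioi] with t (ht : 0 < t)
    positivity
  rw [lintegral_rpow_eq_lintegral_meas_le_mul μ (ae_of_all _ fun _ => abs_nonneg _)
    h.aemeasurable.abs hp]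
  calc ENNReal.ofReal p * ∫⁻ t in Set.Ioi 0, μ {ω | t ≤ |X ω|} * ENNReal.ofReal (t ^ (p - 1))
      ≤ ENNReal.ofReal p * ∫⁻ t in Set.Ioi 0, ENNReal.ofReal (g t) := by
        gcongr ENNReal.ofReal p * ?_
        refine lintegral_mono_ae ?_
        filter_upwards [ae_restrict_mem measurableSet_Ioi] with t (ht : 0 < t)
        rw [← ofReal_measureReal, ← ENNReal.ofReal_mul (by positivity), mul_comm]
        exact ENNReal.ofReal_le_ofReal
          (mul_le_mul_of_nonneg_left (h.measureReal_abs_ge_le ht.le) (by positivity))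
    _ = ENNReal.ofReal (p * Gamma (p / 2) * (2 * c) ^ (p / 2)) := by
        rw [← ofReal_integral_eq_lintegral_ofReal hg_int hg_nonneg,
          integral_rpow_mul_two_mul_exp_neg_sq_div hp hc, ← ENNReal.ofReal_mul hp.le, mul_assoc]

lemma integral_abs_rpow_le (h : HasSubgaussianMGF X c μ) {p : ℝ} (hp : 0 < p) :
    ∫ ω, |X ω| ^ p ∂μ ≤ p * Gamma (p / 2) * (2 * c) ^ (p / 2) := by
  rw [integral_eq_lintegral_of_nonneg_ae (ae_of_all _ fun _ => by positivity)
    (h.aemeasurable.abs.pow_const p).aestronglyMeasurable]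
  exact ENNReal.toReal_le_of_le_ofReal (by positivity) (h.lintegral_abs_rpow_le hp)

lemma integral_abs_rpow_le_cConst_mul [IsProbabilityMeasure μ] {s : ℝ≥0}
    (h : HasSubgaussianMGF X ((s / 2) ^ 2) μ) {p : ℝ} (hp : 1 ≤ p) :
    ∫ ω, |X ω| ^ p ∂μ ≤ cConst p * s ^ p := by
  rcases hp.eq_or_lt with rfl | hp
  · have hmean_sq : (∫ ω, |X ω| ∂μ) ^ 2 ≤ ∫ ω, X ω ^ 2 ∂μ := by
      have := variance_nonneg |X| μ
      rw [variance_eq_sub (h.memLp 2).abs] at this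
      simpa [sq_abs] using this
    have hsq : ∫ ω, X ω ^ 2 ∂μ ≤ s ^ 2 := by
      have := h.integral_abs_rpow_le two_pos
      norm_num [Gamma_one] at this
      linarith
    simp only [cConst, if_true, one_mul, rpow_one]
    nlinarith [integral_nonneg (μ := μ) (f := fun ω => |X ω|) fun ω => abs_nonneg _, s.2]
  · have hmom := h.integral_abs_rpow_le (by linarith : 0 < p)
    rw [cConst, if_neg hp.ne']
    push_cast at hmom
    have hscale : (2 * ((s : ℝ) / 2) ^ 2) ^ (p / 2) = 2 ^ (-p / 2) * (s : ℝ) ^ p := by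
      rw [show 2 * ((s : ℝ) / 2) ^ 2 = 2⁻¹ * (s : ℝ) ^ 2 by ring,
        mul_rpow (by norm_num) (by positivity), inv_rpow (by norm_num), ← rpow_neg (by norm_num),
        ← rpow_natCast, ← rpow_mul s.coe_nonneg, neg_div]
      ring_nf
    calc ∫ ω, |X ω| ^ p ∂μ ≤ p * Gamma (p / 2) * (2 * ((s : ℝ) / 2) ^ 2) ^ (p / 2) := hmom
      _ = 2 ^ (-p / 2) * p * Gamma (p / 2) * s ^ p := by rw [hscale]; ring

lemma average_of_iIndepFun {ι : Type*} [Fintype ι] {X : ι → Ω → ℝ} (h_indep : iIndepFun X μ)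
    (h_subG : ∀ i, HasSubgaussianMGF (X i) c μ) :
    HasSubgaussianMGF (fun ω ↦ (Fintype.card ι : ℝ)⁻¹ * ∑ i, X i ω) (c / Fintype.card ι) μ := by
  have hsum := (sum_of_iIndepFun h_indep (s := Finset.univ) fun i _ => h_subG i).const_mul
    (Fintype.card ι : ℝ)⁻¹
  convert hsum using 1
  ext
  simp only [NNReal.coe_div, NNReal.coe_natCast, Finset.sum_const, Finset.card_univ, nsmul_eq_mul]
  change (c : ℝ) / _ = (Fintype.card ι : ℝ)⁻¹ ^ 2 * ((Fintype.card ι : ℝ) * c)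
  rcases eq_or_ne (Fintype.card ι) 0 with hι | hι
  · simp [hι]
  · field_simp

end ProbabilityTheory.HasSubgaussianMGF

lemma ProbabilityTheory.hasSubgaussianMGF_comp_sub_integral {Ω E : Type*} [MeasurableSpace Ω]
    [MeasurableSpace E] {μ : Measure Ω} {P : Measure E} [IsProbabilityMeasure P] {Y : Ω → E}
    (hY : Measurable Y) (hlaw : μ.map Y = P) {h : E → ℝ} (hh : Measurable h) {a b : ℝ}
    (hab : ∀ x, h x ∈ Set.Icc a b) :
    HasSubgaussianMGF (fun ω ↦ h (Y ω) - ∫ x, h x ∂P) ((‖b - a‖₊ / 2) ^ 2) μ := by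
  subst hlaw
  exact (hasSubgaussianMGF_of_mem_Icc hh.aemeasurable (ae_of_all _ hab)).of_map hY.aemeasurable

/-- Lemma 1: weak-sense `L_p` error of the sampling operator. -/
theorem lp_sampling_error
    {E : Type*} [MeasurableSpace E] {Ω : Type*} [MeasurableSpace Ω]
    (μ : Measure Ω) [IsProbabilityMeasure μ]
    (P : Measure E) [IsProbabilityMeasure P]
    (N : ℕ) (hN : 1 ≤ N)
    (ξ : Fin N → Ω → E)
    (hmeas : ∀ k, Measurable (ξ k))
    (hindep : iIndepFun ξ μ)
    (hlaw : ∀ k, Measure.map (ξ k) μ = P)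
    (h : E → ℝ) (hmh : Measurable h)
    (hosc : BddAbove (Set.range fun q : E × E => |h q.1 - h q.2|))
    (p : ℝ) (hp : 1 ≤ p) :
    (∫ ω, |(1 / (N : ℝ)) * ∑ k, h (ξ k ω) - ∫ x, h x ∂P| ^ p ∂μ) ^ (1 / p) ≤
      (cConst p) ^ (1 / p) * osc h / Real.sqrt N := by
  have : Nonempty E := nonempty_of_isProbabilityMeasure P
  set m := ∫ x, h x ∂P
  have hX : ∀ k, HasSubgaussianMGF (fun ω ↦ h (ξ k ω) - m) ((‖osc h‖₊ / 2) ^ 2) μ := fun k => by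
    simpa using hasSubgaussianMGF_comp_sub_integral (hmeas k) (hlaw k) hmh
      (mem_Icc_iInf_add_osc hosc)
  have hZ : HasSubgaussianMGF (fun ω ↦ 1 / (N : ℝ) * ∑ k, h (ξ k ω) - m)
      ((‖osc h‖₊ / NNReal.sqrt N / 2) ^ 2) μ := by
    convert HasSubgaussianMGF.average_of_iIndepFun (hindep.comp _ fun _ => hmh.sub_const m) hX
      using 1
    · ext ω
      have hN0 : (N : ℝ) ≠ 0 := Nat.cast_ne_zero.mpr (Nat.one_le_iff_ne_zero.mp hN)
      simp only [Function.comp_apply, Finset.sum_sub_distrib, Finset.sum_const, Finset.card_univ,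
        Fintype.card_fin, nsmul_eq_mul]
      field_simp
    · rw [Fintype.card_fin, div_right_comm, div_pow, NNReal.sq_sqrt]
  have hosc0 : 0 ≤ osc h :=
    (abs_nonneg _).trans (abs_sub_le_osc hosc (Classical.arbitrary E) (Classical.arbitrary E))
  have hs : ((‖osc h‖₊ / NNReal.sqrt N : ℝ≥0) : ℝ) = osc h / √N := by simp [abs_of_nonneg hosc0]
  have hmom := hZ.integral_abs_rpow_le_cConst_mul hp
  rw [hs] at hmom
  calc _ ≤ (cConst p * (osc h / √N) ^ p) ^ (1 / p) :=
        rpow_le_rpow (integral_nonneg fun _ => by positivity) hmom (by positivity)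
    _ = _ := by
        rw [mul_rpow (cConst_nonneg (by linarith)) (by positivity), ← rpow_mul (by positivity),
          mul_one_div_cancel (by positivity), rpow_one, mul_div_assoc]
end

section
/- Let (E₁, ℰ₁) and (E₂, ℰ₂) be measurable spaces, let G : E₁ → ℝ be a bounded measurable function with inf_{x ∈ E₁} G(x) > 0, and let P be a Markov kernel from E₁ to E₂ with Dobrushin contraction coefficient β(P) = sup{ sup_{A ∈ ℰ₂} |P(x, A) − P(y, A)| : x, y ∈ E₁ }. For a probability measure ν on E₁ let Φ(ν) be the probability measure on E₂ defined by Φ(ν)(A) = (∫_{E₁} G(x) P(x, A) ν(dx)) / (∫_{E₁} G dν). Then for any two probability measures η, μ on E₁ and any bounded measurable h₂ : E₂ → ℝ with osc(h₂) ≤ 1, there exists a bounded measurable h₁ : E₁ → ℝ with osc(h₁) ≤ 1 such that |Φ(η)(h₂) − Φ(μ)(h₂)| ≤ β(P) · (sup_{x} G(x) / ∫_{E₁} G dη) · (2 − inf_{x} G(x) / sup_{x} G(x)) · |∫_{E₁} h₁ dη − ∫_{E₁} h₁ dμ|. -/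
/-!
Write `Ph x = ∫ h d(P x)`. Then `Φ(ν)(h) = Ψ(ν)(Ph)`, and `Ph` oscillates by at most `β(P)`:
split `P x - P y` along a Hahn decomposition. The constant `c = Ψ(μ)(Ph)` is a `G`-weighted
average of `Ph`, so `g = G (Ph - c)` satisfies `μ(g) = 0`, `η(g) = η(G) (Φ(η)(h) - Φ(μ)(h))`, and
`|g x - g y| ≤ G x |Ph x - Ph y| + |G x - G y| |Ph y - c| ≤ β(P) (2 sup G - inf G)`.
Dividing `g` by this bound gives `h₁`.
-/

open MeasureTheory ProbabilityTheory Real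

/-- The Dobrushin contraction coefficient of a Markov kernel:
`β(P) = sup { |P(x,A) − P(y,A)| : x, y, A measurable }`. -/
noncomputable def dobrushin {E₁ E₂ : Type*} [MeasurableSpace E₁] [MeasurableSpace E₂]
    (P : ProbabilityTheory.Kernel E₁ E₂) : ℝ :=
  ⨆ x : E₁, ⨆ y : E₁, ⨆ A : {s : Set E₂ // MeasurableSet s},
    |(P x A.1).toReal - (P y A.1).toReal|

/-- The Feynman-Kac update operator `Φ(ν) = Ψ(ν)P`, where `Ψ` is the
Boltzmann-Gibbs transformation with potential `G`:
`Φ(ν)(A) = (∫ G(x) P(x,A) ν(dx)) / ν(G)`. -/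
noncomputable def fkUpdate {E₁ E₂ : Type*} [MeasurableSpace E₁] [MeasurableSpace E₂]
    (G : E₁ → ℝ) (P : ProbabilityTheory.Kernel E₁ E₂) (ν : Measure E₁) :
    Measure E₂ :=
  (∫⁻ x, ENNReal.ofReal (G x) ∂ν)⁻¹ •
    ((ν.withDensity fun x => ENNReal.ofReal (G x)).bind fun x => P x)

section Oscillation

variable {E : Type*} {h : E → ℝ}

lemma abs_sub_le_osc_s4 {C : ℝ} (hC : ∀ z, |h z| ≤ C) (x y : E) : |h x - h y| ≤ osc h := by
  refine le_ciSup (f := fun q : E × E => |h q.1 - h q.2|) ⟨2 * C, ?_⟩ (x, y)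
  rintro _ ⟨q, rfl⟩
  linarith [abs_sub (h q.1) (h q.2), hC q.1, hC q.2]

lemma osc_le_of_forall_abs_sub_le {c : ℝ} (hc : 0 ≤ c) (H : ∀ x y, |h x - h y| ≤ c) :
    osc h ≤ c :=
  Real.iSup_le (fun q => H q.1 q.2) hc

end Oscillation

lemma integrable_of_forall_abs_le {E : Type*} [MeasurableSpace E] {μ : Measure E}
    [IsFiniteMeasure μ] {f : E → ℝ} (hf : Measurable f) {C : ℝ} (hC : ∀ x, |f x| ≤ C) :
    Integrable f μ :=
  .of_bound hf.aestronglyMeasurable C (ae_of_all _ hC)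

section TotalVariation

variable {E : Type*} [MeasurableSpace E] {p q : Measure E}

lemma integral_sub_integral_le_of_isHahnDecomposition [IsFiniteMeasure p] [IsFiniteMeasure q]
    {s : Set E} (hs : IsHahnDecomposition q p s) {f : E → ℝ} (hf : Measurable f)
    (hf0 : ∀ x, 0 ≤ f x) (hf1 : ∀ x, f x ≤ 1) :
    (∫ x, f x ∂p) - ∫ x, f x ∂q ≤ p.real s - q.real s := by
  have hfb : ∀ x, |f x| ≤ 1 := fun x => abs_le.2 ⟨by linarith [hf0 x], hf1 x⟩
  have hint : ∀ (ν : Measure E) [IsFiniteMeasure ν], Integrable f ν :=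
    fun _ _ => integrable_of_forall_abs_le hf hfb
  have hcompl : ∫ x in sᶜ, f x ∂p ≤ ∫ x in sᶜ, f x ∂q :=
    integral_mono_measure hs.ge_on_compl (ae_of_all _ hf0) (hint _).restrict
  have hon : ∫ x in s, (1 - f x) ∂q ≤ ∫ x in s, (1 - f x) ∂p :=
    integral_mono_measure hs.le_on (ae_of_all _ fun x => sub_nonneg.2 (hf1 x))
      ((integrable_const 1).sub (hint _)).restrict
  have hsplit : ∀ (ν : Measure E) [IsFiniteMeasure ν],
      ∫ x, f x ∂ν = ν.real s - ∫ x in s, (1 - f x) ∂ν + ∫ x in sᶜ, f x ∂ν := by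
    intro ν _
    rw [integral_sub (integrable_const 1) (hint _).restrict, setIntegral_const,
      smul_eq_mul, mul_one, ← integral_add_compl hs.measurableSet (hint ν)]
    ring
  rw [hsplit p, hsplit q]
  linarith

variable [IsProbabilityMeasure p] [IsProbabilityMeasure q]

lemma integral_sub_integral_le_of_measureReal_sub_le {h : E → ℝ} (hm : Measurable h) {C : ℝ}
    (hC : ∀ z, |h z| ≤ C) (hosc : ∀ x y, h x - h y ≤ 1) {β : ℝ}
    (hβ : ∀ A, MeasurableSet A → p.real A - q.real A ≤ β) :
    (∫ z, h z ∂p) - ∫ z, h z ∂q ≤ β := by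
  have := nonempty_of_isProbabilityMeasure p
  obtain ⟨s, hs⟩ := exists_isHahnDecomposition q p
  have hbdd : BddBelow (Set.range h) :=
    ⟨-C, by rintro _ ⟨z, rfl⟩; linarith [neg_abs_le (h z), hC z]⟩
  set c := ⨅ z, h z
  have hc : ∀ z, c ≤ h z := ciInf_le hbdd
  have hc' : ∀ z, h z - 1 ≤ c := fun z => le_ciInf fun y => by linarith [hosc z y]
  have hshift : ∀ (ν : Measure E) [IsProbabilityMeasure ν],
      ∫ z, (h z - c) ∂ν = ∫ z, h z ∂ν - c := fun ν _ => by
      rw [integral_sub (integrable_of_forall_abs_le hm hC) (integrable_const c), integral_const,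
        probReal_univ, one_smul]
  have key := integral_sub_integral_le_of_isHahnDecomposition hs (f := fun z => h z - c)
    (hm.sub measurable_const) (fun z => sub_nonneg.2 (hc z)) (fun z => by linarith [hc' z])
  rw [hshift p, hshift q] at key
  linarith [hβ s hs.measurableSet]

lemma abs_integral_sub_integral_le_of_abs_measureReal_sub_le {h : E → ℝ} (hm : Measurable h)
    {C : ℝ} (hC : ∀ z, |h z| ≤ C) (hosc : osc h ≤ 1) {β : ℝ}
    (hβ : ∀ A, MeasurableSet A → |p.real A - q.real A| ≤ β) :
    |(∫ z, h z ∂p) - ∫ z, h z ∂q| ≤ β := by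
  have hosc' : ∀ x y, h x - h y ≤ 1 :=
    fun x y => (le_abs_self _).trans ((abs_sub_le_osc_s4 hC x y).trans hosc)
  refine abs_sub_le_iff.2 ⟨?_, ?_⟩
  · exact integral_sub_integral_le_of_measureReal_sub_le hm hC hosc'
      fun A hA => (le_abs_self _).trans (hβ A hA)
  · exact integral_sub_integral_le_of_measureReal_sub_le hm hC hosc'
      fun A hA => (abs_sub_comm (q.real A) _ ▸ le_abs_self _).trans (hβ A hA)

end TotalVariation

section Dobrushin

variable {E₁ E₂ : Type*} [MeasurableSpace E₁] [MeasurableSpace E₂] (P : Kernel E₁ E₂)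
  [IsMarkovKernel P]

lemma abs_measureReal_sub_le_dobrushin (x y : E₁) {A : Set E₂} (hA : MeasurableSet A) :
    |(P x).real A - (P y).real A| ≤ dobrushin P := by
  let d : E₁ → E₁ → {s : Set E₂ // MeasurableSet s} → ℝ :=
    fun x y A => |(P x A.1).toReal - (P y A.1).toReal|
  have hle : ∀ x y A, d x y A ≤ 1 := fun x y A =>
    abs_sub_le_of_nonneg_of_le measureReal_nonneg measureReal_le_one measureReal_nonneg
      measureReal_le_one
  have hsup : ∀ x y, ⨆ A, d x y A ≤ 1 := fun x y => Real.iSup_le (hle x y) zero_le_one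
  calc |(P x).real A - (P y).real A| = d x y ⟨A, hA⟩ := rfl
    _ ≤ ⨆ A, d x y A := le_ciSup ⟨1, Set.forall_mem_range.2 (hle x y)⟩ _
    _ ≤ ⨆ y', ⨆ A, d x y' A := le_ciSup ⟨1, Set.forall_mem_range.2 (hsup x)⟩ y
    _ ≤ ⨆ x', ⨆ y', ⨆ A, d x' y' A :=
        le_ciSup ⟨1, Set.forall_mem_range.2 fun x' => Real.iSup_le (hsup x') zero_le_one⟩ x
    _ = dobrushin P := rfl

lemma abs_integral_sub_integral_le_dobrushin {h : E₂ → ℝ} (hm : Measurable h) {C : ℝ}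
    (hC : ∀ z, |h z| ≤ C) (hosc : osc h ≤ 1) (x y : E₁) :
    |(∫ z, h z ∂(P x)) - ∫ z, h z ∂(P y)| ≤ dobrushin P :=
  abs_integral_sub_integral_le_of_abs_measureReal_sub_le hm hC hosc
    fun _ hA => abs_measureReal_sub_le_dobrushin P x y hA

lemma abs_integral_kernel_le {h : E₂ → ℝ} {C : ℝ} (hC : ∀ z, |h z| ≤ C) (x : E₁) :
    |∫ z, h z ∂(P x)| ≤ C := by
  simpa using norm_integral_le_of_norm_le_const (μ := P x) (f := h) (ae_of_all _ hC)

end Dobrushin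

lemma abs_mul_sub_sub_mul_sub_le {a b i s u v c β : ℝ} (hi : 0 ≤ i) (ha : a ∈ Set.Icc i s)
    (hb : b ∈ Set.Icc i s) (huv : |u - v| ≤ β) (hvc : |v - c| ≤ β) :
    |a * (u - c) - b * (v - c)| ≤ β * (2 * s - i) := by
  have ha' : |a| ≤ s := by rw [abs_of_nonneg (hi.trans ha.1)]; exact ha.2
  have hab : |a - b| ≤ s - i :=
    abs_sub_le_iff.2 ⟨by linarith [ha.2, hb.1], by linarith [ha.1, hb.2]⟩
  have hβ : 0 ≤ β := (abs_nonneg _).trans huv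
  calc |a * (u - c) - b * (v - c)| = |a * (u - v) + (a - b) * (v - c)| := by ring_nf
    _ ≤ |a| * |u - v| + |a - b| * |v - c| := by
        rw [← abs_mul, ← abs_mul]; exact abs_add_le _ _
    _ ≤ s * β + (s - i) * β := by
        have : 0 ≤ s - i := by linarith [ha.1, ha.2]
        gcongr
        linarith
    _ = β * (2 * s - i) := by ring

section BoltzmannGibbs

variable {E : Type*} [MeasurableSpace E]

/-- The Boltzmann-Gibbs transform `Ψ(ν)` of `fkUpdate`, evaluated at `u`. -/
noncomputable def boltzmannGibbs (G : E → ℝ) (ν : Measure E) (u : E → ℝ) : ℝ :=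
  (∫ x, G x * u x ∂ν) / ∫ x, G x ∂ν

variable {G u : E → ℝ} {ν : Measure E}

lemma integral_mul_sub_boltzmannGibbs (hGint : Integrable G ν)
    (hGu : Integrable (fun x => G x * u x) ν) (hG : ∫ x, G x ∂ν ≠ 0) (c : ℝ) :
    ∫ x, G x * (u x - c) ∂ν = (∫ x, G x ∂ν) * (boltzmannGibbs G ν u - c) := by
  simp_rw [mul_sub]
  rw [integral_sub hGu (hGint.mul_const c), integral_mul_const, boltzmannGibbs]
  field_simp

lemma abs_sub_boltzmannGibbs_le (hGint : Integrable G ν)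
    (hGu : Integrable (fun x => G x * u x) ν) (hG0 : ∀ x, 0 ≤ G x) (hG : 0 < ∫ x, G x ∂ν)
    {β : ℝ} {x : E} (hx : ∀ y, |u y - u x| ≤ β) :
    |boltzmannGibbs G ν u - u x| ≤ β := by
  have hbound : |∫ y, G y * (u y - u x) ∂ν| ≤ ∫ y, G y * β ∂ν :=
    norm_integral_le_of_norm_le (f := fun y => G y * (u y - u x)) (hGint.mul_const β)
      (ae_of_all _ fun y => by
      rw [Real.norm_eq_abs, abs_mul, abs_of_nonneg (hG0 y)]
      exact mul_le_mul_of_nonneg_left (hx y) (hG0 y))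
  rw [integral_mul_sub_boltzmannGibbs hGint hGu hG.ne', integral_mul_const, abs_mul,
    abs_of_pos hG] at hbound
  exact le_of_mul_le_mul_left hbound hG

end BoltzmannGibbs

section Normalization

variable {E : Type*} [MeasurableSpace E] (η μ : Measure E) [IsProbabilityMeasure η]
  [IsProbabilityMeasure μ]

lemma exists_osc_le_one_integral_sub_eq_mul {g : E → ℝ} (hg : Measurable g) {C : ℝ}
    (hC : ∀ x, |g x| ≤ C) {c : ℝ} (hc : 0 ≤ c) (hosc : ∀ x y, |g x - g y| ≤ c) :
    ∃ h₁ : E → ℝ, Measurable h₁ ∧ (∃ C : ℝ, ∀ x, |h₁ x| ≤ C) ∧ osc h₁ ≤ 1 ∧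
      (∫ x, g x ∂η) - ∫ x, g x ∂μ = c * ((∫ x, h₁ x ∂η) - ∫ x, h₁ x ∂μ) := by
  refine ⟨fun x => g x / c, hg.div_const c, ⟨C / c, fun x => ?_⟩,
    osc_le_of_forall_abs_sub_le zero_le_one fun x y => ?_, ?_⟩
  · rw [abs_div, abs_of_nonneg hc]
    exact div_le_div_of_nonneg_right (hC x) hc
  · rw [← sub_div, abs_div, abs_of_nonneg hc]
    exact div_le_one_of_le₀ (hosc x y) hc
  rcases hc.eq_or_lt with rfl | hc
  · obtain ⟨x₀⟩ := nonempty_of_isProbabilityMeasure η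
    have hconst : g = fun _ => g x₀ :=
      funext fun x => sub_eq_zero.1 (abs_nonpos_iff.1 (hosc x x₀))
    rw [hconst]
    simp
  · simp_rw [integral_div]
    field_simp

end Normalization

theorem exists_abs_boltzmannGibbs_sub_le {E : Type*} [MeasurableSpace E] {G : E → ℝ}
    (hGm : Measurable G) {i s : ℝ} (hi : 0 < i) (hGi : ∀ x, i ≤ G x) (hGs : ∀ x, G x ≤ s)
    {u : E → ℝ} (hum : Measurable u) {C : ℝ} (huC : ∀ x, |u x| ≤ C) {β : ℝ}
    (hβ : ∀ x y, |u x - u y| ≤ β) (η μ : Measure E) [IsProbabilityMeasure η]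
    [IsProbabilityMeasure μ] :
    ∃ h₁ : E → ℝ, Measurable h₁ ∧ (∃ C : ℝ, ∀ x, |h₁ x| ≤ C) ∧ osc h₁ ≤ 1 ∧
      |boltzmannGibbs G η u - boltzmannGibbs G μ u| ≤
        β * (s / ∫ x, G x ∂η) * (2 - i / s) * |(∫ x, h₁ x ∂η) - ∫ x, h₁ x ∂μ| := by
  obtain ⟨x₀⟩ := nonempty_of_isProbabilityMeasure η
  have hG0 : ∀ x, 0 ≤ G x := fun x => hi.le.trans (hGi x)
  have his : i ≤ s := (hGi x₀).trans (hGs x₀)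
  have hβ0 : 0 ≤ β := (abs_nonneg _).trans (hβ x₀ x₀)
  have hGabs : ∀ x, |G x| ≤ s := fun x => (abs_of_nonneg (hG0 x)).trans_le (hGs x)
  have hGint : ∀ (ν : Measure E) [IsProbabilityMeasure ν], Integrable G ν :=
    fun _ _ => integrable_of_forall_abs_le hGm hGabs
  have hGuint : ∀ (ν : Measure E) [IsProbabilityMeasure ν], Integrable (fun x => G x * u x) ν :=
    fun ν _ => (hGint ν).mul_bdd hum.aestronglyMeasurable (ae_of_all _ huC)
  have hGpos : ∀ (ν : Measure E) [IsProbabilityMeasure ν], 0 < ∫ x, G x ∂ν := fun ν _ => by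
    have := integral_mono (integrable_const i) (hGint ν) hGi
    rw [integral_const, probReal_univ, one_smul] at this
    linarith
  set c := boltzmannGibbs G μ u
  have huc : ∀ x, |u x - c| ≤ β := fun x => by
    rw [abs_sub_comm]
    exact abs_sub_boltzmannGibbs_le (hGint μ) (hGuint μ) hG0 (hGpos μ) fun y => hβ y x
  have hs : 0 < s := hi.trans_le his
  obtain ⟨h₁, hm, hb, hosc, heq⟩ := exists_osc_le_one_integral_sub_eq_mul η μ
    (g := fun x => G x * (u x - c)) (hGm.mul (hum.sub_const c)) (C := s * β)
    (fun x => by rw [abs_mul]; exact mul_le_mul (hGabs x) (huc x) (abs_nonneg _) hs.le)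
    (mul_nonneg hβ0 (by linarith)) fun x y =>
      abs_mul_sub_sub_mul_sub_le hi.le ⟨hGi x, hGs x⟩ ⟨hGi y, hGs y⟩ (hβ x y) (huc y)
  refine ⟨h₁, hm, hb, hosc, ?_⟩
  rw [integral_mul_sub_boltzmannGibbs (hGint η) (hGuint η) (hGpos η).ne',
    integral_mul_sub_boltzmannGibbs (hGint μ) (hGuint μ) (hGpos μ).ne', sub_self, mul_zero,
    sub_zero] at heq
  have hηG := hGpos η
  have hdiff : boltzmannGibbs G η u - c =
      β * (2 * s - i) * ((∫ x, h₁ x ∂η) - ∫ x, h₁ x ∂μ) / ∫ x, G x ∂η := by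
    rw [← heq]; field_simp
  rw [hdiff, abs_div, abs_mul, abs_of_pos hηG,
    abs_of_nonneg (mul_nonneg hβ0 (by linarith : 0 ≤ 2 * s - i))]
  exact le_of_eq (by field_simp)

lemma integral_fkUpdate {E₁ E₂ : Type*} [MeasurableSpace E₁] [MeasurableSpace E₂]
    {G : E₁ → ℝ} (hGm : Measurable G) (hG0 : ∀ x, 0 ≤ G x) (P : Kernel E₁ E₂)
    [IsMarkovKernel P] {ν : Measure E₁} (hGint : Integrable G ν) {h : E₂ → ℝ}
    (hm : Measurable h) {C : ℝ} (hC : ∀ z, |h z| ≤ C) :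
    ∫ z, h z ∂(fkUpdate G P ν) = boltzmannGibbs G ν fun x => ∫ z, h z ∂(P x) := by
  set ν' := ν.withDensity fun x => ENNReal.ofReal (G x)
  have : IsFiniteMeasure ν' := isFiniteMeasure_withDensity_ofReal hGint.2
  have hbind : ∫ z, h z ∂(P ∘ₘ ν') = ∫ x, ∫ z, h z ∂(P x) ∂ν' := by
    rw [← Measure.snd_compProd, Measure.snd, integral_map measurable_snd.aemeasurable
      hm.aestronglyMeasurable, Measure.integral_compProd
      (integrable_of_forall_abs_le (f := fun z => h z.2) (by fun_prop) fun z => hC z.2)]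
  have hdensity : ∫ x, ∫ z, h z ∂(P x) ∂ν' = ∫ x, G x * ∫ z, h z ∂(P x) ∂ν := by
    rw [integral_withDensity_eq_integral_toReal_smul hGm.ennreal_ofReal
      (ae_of_all _ fun _ => ENNReal.ofReal_lt_top)]
    simp_rw [ENNReal.toReal_ofReal (hG0 _), smul_eq_mul]
  have hnorm : ∫⁻ x, ENNReal.ofReal (G x) ∂ν = ENNReal.ofReal (∫ x, G x ∂ν) :=
    (ofReal_integral_eq_lintegral_ofReal hGint (ae_of_all _ hG0)).symm
  rw [fkUpdate, integral_smul_measure, hbind, hdensity, hnorm, ENNReal.toReal_inv,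
    ENNReal.toReal_ofReal (integral_nonneg hG0), smul_eq_mul, inv_mul_eq_div, boltzmannGibbs]

/-- Proposition 2: one-step error propagation through the Feynman-Kac
operator. -/
theorem fk_error_propagation
    {E₁ E₂ : Type*} [MeasurableSpace E₁] [MeasurableSpace E₂]
    (G : E₁ → ℝ) (hGmeas : Measurable G)
    (hGbdd : BddAbove (Set.range G)) (hGpos : 0 < ⨅ x, G x)
    (P : ProbabilityTheory.Kernel E₁ E₂) [IsMarkovKernel P]
    (η μ : Measure E₁) [IsProbabilityMeasure η] [IsProbabilityMeasure μ]
    (h₂ : E₂ → ℝ) (hh₂meas : Measurable h₂)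
    (hh₂bdd : ∃ C : ℝ, ∀ z, |h₂ z| ≤ C) (hh₂osc : osc h₂ ≤ 1) :
    ∃ h₁ : E₁ → ℝ, Measurable h₁ ∧ (∃ C : ℝ, ∀ x, |h₁ x| ≤ C) ∧ osc h₁ ≤ 1 ∧
      |(∫ z, h₂ z ∂(fkUpdate G P η)) - ∫ z, h₂ z ∂(fkUpdate G P μ)| ≤
        dobrushin P * ((⨆ x, G x) / ∫ x, G x ∂η) *
          (2 - (⨅ x, G x) / ⨆ x, G x) *
          |(∫ x, h₁ x ∂η) - ∫ x, h₁ x ∂μ| := by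
  obtain ⟨C, hC⟩ := hh₂bdd
  have hGbdd' : BddBelow (Set.range G) := by
    by_contra h
    simp [Real.iInf_of_not_bddBelow h] at hGpos
  have hGi : ∀ x, ⨅ x, G x ≤ G x := ciInf_le hGbdd'
  have hGs : ∀ x, G x ≤ ⨆ x, G x := le_ciSup hGbdd
  have hG0 : ∀ x, 0 ≤ G x := fun x => hGpos.le.trans (hGi x)
  have hGint : ∀ (ν : Measure E₁) [IsProbabilityMeasure ν], Integrable G ν := fun _ _ =>
    integrable_of_forall_abs_le hGmeas fun x => (abs_of_nonneg (hG0 x)).trans_le (hGs x)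
  rw [integral_fkUpdate hGmeas hG0 P (hGint η) hh₂meas hC,
    integral_fkUpdate hGmeas hG0 P (hGint μ) hh₂meas hC]
  exact exists_abs_boltzmannGibbs_sub_le hGmeas hGpos hGi hGs
    (hh₂meas.stronglyMeasurable.integral_kernel (κ := P)).measurable
    (abs_integral_kernel_le P hC)
    (abs_integral_sub_integral_le_dobrushin P hh₂meas hC hh₂osc) η μ
end

section
/- Let Z be a nonnegative real-valued random variable on a probability space, let K > 0, and suppose that for every integer n ≥ 1, Z^n is integrable with E[Z^n] ≤ c(n) K^n. Then for every τ ≥ 0, exp(τZ) is integrable and E[ exp(τ Z) ] ≤ (1 + √(2π) τ K) · e^{τ² K² / 8}. -/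
open MeasureTheory Real

/-!
By monotone convergence, `E[e^{τZ}] = ∑ τⁿ E[Zⁿ] / n!`. For every `n ≥ 1`,
`c(n) Kⁿ ≤ 2n ∫₀^∞ t^{n-1} e^{-2t²/K²} dt` (an equality for `n ≥ 2`; for `n = 1` it reads
`1 ≤ √(π/2)`), so after resumming the exponential series under the integral the terms with
`n ≥ 1` contribute at most `2τ ∫₀^∞ e^{τt - 2t²/K²} dt`. Completing the square bounds this by
`2τ e^{τ²K²/8} K √(π/2) = √(2π) τ K e^{τ²K²/8}`.
-/

open Set

theorem ENNReal.ofReal_exp_eq_tsum {x : ℝ} (hx : 0 ≤ x) :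
    ENNReal.ofReal (exp x) = ∑' n : ℕ, ENNReal.ofReal (x ^ n / n.factorial) := by
  rw [← ENNReal.ofReal_tsum_of_nonneg (fun n => by positivity) (Real.summable_pow_div_factorial x),
    (NormedSpace.expSeries_div_hasSum_exp x).tsum_eq, Real.exp_eq_exp_ℝ]

theorem lintegral_ofReal_exp_mul_eq_tsum {α : Type*} [MeasurableSpace α] {μ : Measure α}
    {X : α → ℝ} (hX : AEMeasurable X μ) (hX0 : 0 ≤ᵐ[μ] X) {τ : ℝ} (hτ : 0 ≤ τ) :
    ∫⁻ a, ENNReal.ofReal (exp (τ * X a)) ∂μ =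
      ∑' n : ℕ, ENNReal.ofReal (τ ^ n / n.factorial) * ∫⁻ a, ENNReal.ofReal (X a ^ n) ∂μ := by
  calc ∫⁻ a, ENNReal.ofReal (exp (τ * X a)) ∂μ
      = ∫⁻ a, ∑' n : ℕ, ENNReal.ofReal (τ ^ n / n.factorial) * ENNReal.ofReal (X a ^ n) ∂μ := by
        refine lintegral_congr_ae (hX0.mono fun a ha => ?_)
        dsimp only
        rw [ENNReal.ofReal_exp_eq_tsum (mul_nonneg hτ ha)]
        congr 1 with n
        rw [← ENNReal.ofReal_mul (by positivity), mul_pow, div_mul_eq_mul_div]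
    _ = _ := by
        rw [lintegral_tsum fun n => (hX.pow_const n).ennreal_ofReal.const_mul _]
        congr 1 with n
        exact lintegral_const_mul'' _ (hX.pow_const n).ennreal_ofReal

theorem cConst_le_two_rpow_mul_Gamma (p : ℝ) : cConst p ≤ 2 ^ (-p / 2) * p * Gamma (p / 2) := by
  unfold cConst
  split_ifs with hp
  · subst hp
    rw [Real.Gamma_one_half_eq, mul_one, show (-1 : ℝ) / 2 = -(1 / 2) by ring,
      Real.rpow_neg zero_le_two, ← Real.sqrt_eq_rpow, inv_mul_eq_div,
      ← Real.sqrt_div' _ zero_le_two]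
    exact Real.one_le_sqrt.mpr (by linarith [Real.pi_gt_three])
  · exact le_rfl

theorem integral_pow_mul_exp_neg_two_div_sq_mul_sq {K : ℝ} (hK : 0 < K) (n : ℕ) :
    ∫ t in Ioi (0 : ℝ), t ^ n * exp (-(2 / K ^ 2) * t ^ 2) =
      2 ^ (-((n + 1 : ℕ) : ℝ) / 2) * Gamma (((n + 1 : ℕ) : ℝ) / 2) * K ^ (n + 1) / 2 := by
  have h := integral_rpow_mul_exp_neg_mul_rpow (p := 2) (q := n) two_pos
    (by linarith [n.cast_nonneg (α := ℝ)]) (by positivity : (0 : ℝ) < 2 / K ^ 2)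
  simp only [Real.rpow_natCast, Real.rpow_two] at h
  rw [h, Real.div_rpow zero_le_two (by positivity), ← Real.rpow_natCast K 2,
    ← Real.rpow_mul hK.le,
    show ((2 : ℕ) : ℝ) * (-(n + 1) / 2) = -((n + 1 : ℕ) : ℝ) by push_cast; ring,
    Real.rpow_neg hK.le, Real.rpow_natCast]
  push_cast
  field_simp

/-- The unnormalized Gaussian weight `exp (-b t²) dt` on `(0, ∞)`. -/
noncomputable def halfGaussianMeasure (b : ℝ) : Measure ℝ :=
  (volume.restrict (Ioi 0)).withDensity fun t => ENNReal.ofReal (exp (-b * t ^ 2))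

section halfGaussianMeasure

variable {b : ℝ}

theorem lintegral_halfGaussianMeasure {f : ℝ → ENNReal} (hf : Measurable f) :
    ∫⁻ t, f t ∂halfGaussianMeasure b =
      ∫⁻ t in Ioi 0, ENNReal.ofReal (exp (-b * t ^ 2)) * f t :=
  lintegral_withDensity_eq_lintegral_mul _ (by fun_prop) hf

theorem ae_nonneg_halfGaussianMeasure : ∀ᵐ t ∂halfGaussianMeasure b, 0 ≤ t :=
  (withDensity_absolutelyContinuous _ _).ae_le
    ((ae_restrict_iff' measurableSet_Ioi).mpr (ae_of_all _ fun _ ht => le_of_lt ht))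

theorem lintegral_ofReal_pow_halfGaussianMeasure (hb : 0 < b) (n : ℕ) :
    ∫⁻ t, ENNReal.ofReal (t ^ n) ∂halfGaussianMeasure b =
      ENNReal.ofReal (∫ t in Ioi (0 : ℝ), t ^ n * exp (-b * t ^ 2)) := by
  have hint : IntegrableOn (fun t : ℝ => t ^ n * exp (-b * t ^ 2)) (Ioi 0) := by
    simpa only [Real.rpow_natCast] using
      integrableOn_rpow_mul_exp_neg_mul_sq hb (s := n) (by linarith [n.cast_nonneg (α := ℝ)])
  rw [lintegral_halfGaussianMeasure (by fun_prop), ofReal_integral_eq_lintegral_ofReal hint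
    ((ae_restrict_iff' measurableSet_Ioi).mpr (ae_of_all _ fun t (ht : 0 < t) => by positivity))]
  refine setLIntegral_congr_fun measurableSet_Ioi fun t ht => ?_
  rw [← ENNReal.ofReal_mul (by positivity), mul_comm]

theorem lintegral_ofReal_exp_mul_halfGaussianMeasure_le (hb : 0 < b) (τ : ℝ) :
    ∫⁻ t, ENNReal.ofReal (exp (τ * t)) ∂halfGaussianMeasure b ≤
      ENNReal.ofReal (exp (τ ^ 2 / (4 * b)) * √(π / b)) := by
  -- complete the square: `τ t - b t² = τ²/(4b) - b (t - τ/(2b))²`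
  have hsq (t : ℝ) : ENNReal.ofReal (exp (-b * t ^ 2)) * ENNReal.ofReal (exp (τ * t)) =
      ENNReal.ofReal (exp (τ ^ 2 / (4 * b))) *
        ENNReal.ofReal (exp (-b * (t - τ / (2 * b)) ^ 2)) := by
    rw [← ENNReal.ofReal_mul (exp_pos _).le, ← ENNReal.ofReal_mul (exp_pos _).le, ← exp_add,
      ← exp_add]
    congr 2
    field_simp
    ring
  have hgauss : ∫⁻ t, ENNReal.ofReal (exp (-b * t ^ 2)) = ENNReal.ofReal √(π / b) := by
    rw [← integral_gaussian, ofReal_integral_eq_lintegral_ofReal (integrable_exp_neg_mul_sq hb)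
      (ae_of_all _ fun t => (exp_pos _).le)]
  calc ∫⁻ t, ENNReal.ofReal (exp (τ * t)) ∂halfGaussianMeasure b
      ≤ ∫⁻ t, ENNReal.ofReal (exp (-b * t ^ 2)) * ENNReal.ofReal (exp (τ * t)) := by
        rw [lintegral_halfGaussianMeasure (by fun_prop)]
        exact setLIntegral_le_lintegral _ _
    _ = ENNReal.ofReal (exp (τ ^ 2 / (4 * b))) * ENNReal.ofReal √(π / b) := by
        simp_rw [hsq]
        rw [lintegral_const_mul _ (by fun_prop),
          lintegral_sub_right_eq_self (fun t => ENNReal.ofReal (exp (-b * t ^ 2))), hgauss]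
    _ = ENNReal.ofReal (exp (τ ^ 2 / (4 * b)) * √(π / b)) :=
        (ENNReal.ofReal_mul (exp_pos _).le).symm

end halfGaussianMeasure

section MomentComparison

variable {Ω : Type*} [MeasurableSpace Ω] {μ : Measure Ω} {Z : Ω → ℝ} {K : ℝ}

theorem lintegral_ofReal_pow_succ_le_of_integral_le (hZ0 : 0 ≤ᵐ[μ] Z) (hK : 0 < K) {n : ℕ}
    (hint : Integrable (fun ω => Z ω ^ (n + 1)) μ)
    (hle : ∫ ω, Z ω ^ (n + 1) ∂μ ≤ cConst (n + 1 : ℕ) * K ^ (n + 1)) :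
    ∫⁻ ω, ENNReal.ofReal (Z ω ^ (n + 1)) ∂μ ≤
      ENNReal.ofReal (2 * (n + 1)) *
        ∫⁻ t, ENNReal.ofReal (t ^ n) ∂halfGaussianMeasure (2 / K ^ 2) := by
  rw [← ofReal_integral_eq_lintegral_ofReal hint (hZ0.mono fun ω h => pow_nonneg h _),
    lintegral_ofReal_pow_halfGaussianMeasure (by positivity), ← ENNReal.ofReal_mul (by positivity),
    integral_pow_mul_exp_neg_two_div_sq_mul_sq hK]
  refine ENNReal.ofReal_le_ofReal (hle.trans ?_)
  calc cConst (n + 1 : ℕ) * K ^ (n + 1)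
      ≤ 2 ^ (-((n + 1 : ℕ) : ℝ) / 2) * ((n + 1 : ℕ) : ℝ) * Gamma (((n + 1 : ℕ) : ℝ) / 2) *
          K ^ (n + 1) := by
        gcongr
        exact cConst_le_two_rpow_mul_Gamma _
    _ = _ := by push_cast; ring

theorem lintegral_ofReal_exp_mul_le_halfGaussianMeasure [IsProbabilityMeasure μ]
    (hZ : AEMeasurable Z μ) (hZ0 : 0 ≤ᵐ[μ] Z) (hK : 0 < K)
    (hmom : ∀ n : ℕ, Integrable (fun ω => Z ω ^ (n + 1)) μ ∧
      ∫ ω, Z ω ^ (n + 1) ∂μ ≤ cConst (n + 1 : ℕ) * K ^ (n + 1))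
    {τ : ℝ} (hτ : 0 ≤ τ) :
    ∫⁻ ω, ENNReal.ofReal (exp (τ * Z ω)) ∂μ ≤
      1 + ENNReal.ofReal (2 * τ) *
        ∫⁻ t, ENNReal.ofReal (exp (τ * t)) ∂halfGaussianMeasure (2 / K ^ 2) := by
  have hterm (n : ℕ) :
      ENNReal.ofReal (τ ^ (n + 1) / (n + 1).factorial) * ∫⁻ ω, ENNReal.ofReal (Z ω ^ (n + 1)) ∂μ ≤
        ENNReal.ofReal (2 * τ) * (ENNReal.ofReal (τ ^ n / n.factorial) *
          ∫⁻ t, ENNReal.ofReal (t ^ n) ∂halfGaussianMeasure (2 / K ^ 2)) := by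
    rw [← mul_assoc, ← ENNReal.ofReal_mul (by positivity),
      show 2 * τ * (τ ^ n / n.factorial) = τ ^ (n + 1) / (n + 1).factorial * (2 * (n + 1)) by
        push_cast [Nat.factorial_succ]; field_simp; ring,
      ENNReal.ofReal_mul (by positivity), mul_assoc]
    gcongr
    exact lintegral_ofReal_pow_succ_le_of_integral_le hZ0 hK (hmom n).1 (hmom n).2
  rw [lintegral_ofReal_exp_mul_eq_tsum hZ hZ0 hτ, tsum_eq_zero_add' ENNReal.summable,
    lintegral_ofReal_exp_mul_eq_tsum (X := fun t => t) aemeasurable_id'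
      ae_nonneg_halfGaussianMeasure hτ, ← ENNReal.tsum_mul_left]
  simpa using add_le_add_right (ENNReal.tsum_le_tsum hterm) 1

end MomentComparison

theorem integrable_and_integral_le_of_lintegral_ofReal_le {α : Type*} [MeasurableSpace α]
    {μ : Measure α} {f : α → ℝ} (hf : AEStronglyMeasurable f μ) (hf0 : 0 ≤ᵐ[μ] f) {B : ℝ}
    (hB : 0 ≤ B) (h : ∫⁻ a, ENNReal.ofReal (f a) ∂μ ≤ ENNReal.ofReal B) :
    Integrable f μ ∧ ∫ a, f a ∂μ ≤ B := by
  refine ⟨⟨hf, (hasFiniteIntegral_iff_ofReal hf0).mpr (h.trans_lt ENNReal.ofReal_lt_top)⟩, ?_⟩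
  rw [integral_eq_lintegral_of_nonneg_ae hf0 hf]
  exact ENNReal.toReal_le_of_le_ofReal hB h

/-- Moments-to-MGF estimate from the proof of Theorem 5: if
`E[Zⁿ] ≤ c(n) Kⁿ` for all `n ≥ 1`, then
`E[e^{τZ}] ≤ (1 + √(2π) τ K) e^{τ²K²/8}`. -/
theorem mgf_from_moment_bounds
    {Ω : Type*} [MeasurableSpace Ω] (μ : Measure Ω) [IsProbabilityMeasure μ]
    (Z : Ω → ℝ) (hZmeas : Measurable Z) (hZnonneg : ∀ ω, 0 ≤ Z ω)
    (K : ℝ) (hK : 0 < K)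
    (hmom : ∀ n : ℕ, 1 ≤ n →
      Integrable (fun ω => Z ω ^ n) μ ∧
        (∫ ω, Z ω ^ n ∂μ) ≤ cConst n * K ^ n)
    (τ : ℝ) (hτ : 0 ≤ τ) :
    Integrable (fun ω => Real.exp (τ * Z ω)) μ ∧
      (∫ ω, Real.exp (τ * Z ω) ∂μ) ≤
        (1 + Real.sqrt (2 * Real.pi) * τ * K) *
          Real.exp (τ ^ 2 * K ^ 2 / 8) := by
  have hconst : 2 * τ * (exp (τ ^ 2 / (4 * (2 / K ^ 2))) * √(π / (2 / K ^ 2))) =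
      √(2 * π) * τ * K * exp (τ ^ 2 * K ^ 2 / 8) := by
    rw [show π / (2 / K ^ 2) = K ^ 2 * (2 * π) / 2 ^ 2 by field_simp, Real.sqrt_div',
      Real.sqrt_mul', Real.sqrt_sq hK.le, Real.sqrt_sq two_pos.le]
    · field_simp
      norm_num
    all_goals positivity
  refine integrable_and_integral_le_of_lintegral_ofReal_le (by fun_prop)
    (ae_of_all _ fun _ => (exp_pos _).le) (by positivity) ?_
  calc ∫⁻ ω, ENNReal.ofReal (exp (τ * Z ω)) ∂μ
      ≤ 1 + ENNReal.ofReal (2 * τ) *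
          ∫⁻ t, ENNReal.ofReal (exp (τ * t)) ∂halfGaussianMeasure (2 / K ^ 2) :=
        lintegral_ofReal_exp_mul_le_halfGaussianMeasure hZmeas.aemeasurable
          (ae_of_all _ hZnonneg) hK (fun n => hmom (n + 1) le_add_self) hτ
    _ ≤ 1 + ENNReal.ofReal (2 * τ) *
          ENNReal.ofReal (exp (τ ^ 2 / (4 * (2 / K ^ 2))) * √(π / (2 / K ^ 2))) := by
        gcongr
        exact lintegral_ofReal_exp_mul_halfGaussianMeasure_le (by positivity) τ
    _ = ENNReal.ofReal (1 + √(2 * π) * τ * K * exp (τ ^ 2 * K ^ 2 / 8)) := by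
        rw [← ENNReal.ofReal_mul (by positivity), hconst,
          ENNReal.ofReal_add zero_le_one (by positivity), ENNReal.ofReal_one]
    _ ≤ ENNReal.ofReal ((1 + √(2 * π) * τ * K) * exp (τ ^ 2 * K ^ 2 / 8)) := by
        rw [add_mul, one_mul]
        gcongr
        exact one_le_exp (by positivity)
end

section
/- Let Z be a nonnegative real-valued random variable on a probability space, let K > 0, and suppose that for every integer n ≥ 1, Z^n is integrable with E[Z^n] ≤ c(n) K^n. Then for every ε > 0, P(Z ≥ ε/2) ≤ (1 + 4√(2π) ε / K) · e^{−ε² / (2K²)}. -/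
/-!
Chernoff's bound with `τ = 2ε/K²` reduces the claim to a bound on `E[e^{τZ}]`, which we expand
as `∑ τⁿ E[Zⁿ]/n! ≤ 1 + ∑_{n ≥ 1} c(n) yⁿ/n!` with `y = τK`. Legendre's duplication formula
turns `c(n) yⁿ/n!` into `2√π wⁿ/Γ((n+1)/2)` with `w = y/√8`. The odd-indexed terms
`w^{2k+1}/k!` sum to `w e^{w²}`, and log-convexity of `Γ` bounds every even-indexed term by the
sum of its two odd neighbours, so `E[e^{τZ}] ≤ 1 + 6√π w e^{w²}`. Since `τε/2 = 2w²`, this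
gives the tail bound.
-/

open MeasureTheory Real

open scoped Nat

theorem Real.Gamma_mul_Gamma_add_one_le_two_mul_sq {s : ℝ} (hs : 1 ≤ s) :
    Gamma s * Gamma (s + 1) ≤ 2 * Gamma (s + 1 / 2) ^ 2 := by
  have hconv : Gamma s ≤ Gamma (s - 1 / 2) ^ (1 / 2 : ℝ) * Gamma (s + 1 / 2) ^ (1 / 2 : ℝ) := by
    convert Gamma_mul_add_mul_le_rpow_Gamma_mul_rpow_Gamma (by linarith : 0 < s - 1 / 2)
      (by linarith : 0 < s + 1 / 2) (by norm_num : (0 : ℝ) < 1 / 2) (by norm_num : (0 : ℝ) < 1 / 2)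
      (by norm_num) using 2
    ring
  have hsq : Gamma s ^ 2 ≤ Gamma (s - 1 / 2) * Gamma (s + 1 / 2) := by
    have h0 := Gamma_pos_of_pos (by linarith : 0 < s)
    calc Gamma s ^ 2 ≤ (Gamma (s - 1 / 2) ^ (1 / 2 : ℝ) * Gamma (s + 1 / 2) ^ (1 / 2 : ℝ)) ^ 2 := by
          gcongr
      _ = Gamma (s - 1 / 2) * Gamma (s + 1 / 2) := by
          rw [mul_pow, ← rpow_mul_natCast (Gamma_pos_of_pos (by linarith)).le,
            ← rpow_mul_natCast (Gamma_pos_of_pos (by linarith)).le]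
          norm_num
  have hrec : Gamma (s + 1 / 2) = (s - 1 / 2) * Gamma (s - 1 / 2) := by
    rw [← Gamma_add_one (by linarith)]; ring_nf
  have hpos := Gamma_pos_of_pos (by linarith : 0 < s + 1 / 2)
  have hpos' := Gamma_pos_of_pos (by linarith : 0 < s - 1 / 2)
  rw [Gamma_add_one (by linarith)]
  nlinarith [mul_le_mul_of_nonneg_left hsq (by linarith : 0 ≤ s)]

theorem Real.div_Gamma_add_half_le {s w : ℝ} (hs : 1 ≤ s) (hw : 0 ≤ w) :
    w / Gamma (s + 1 / 2) ≤ (Gamma s)⁻¹ + w ^ 2 / Gamma (s + 1) := by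
  have ha := Gamma_pos_of_pos (by linarith : 0 < s)
  have hb := Gamma_pos_of_pos (by linarith : 0 < s + 1)
  have hG := Gamma_pos_of_pos (by linarith : 0 < s + 1 / 2)
  have hab := Gamma_mul_Gamma_add_one_le_two_mul_sq hs
  set a := Gamma s
  set b := Gamma (s + 1)
  set G := Gamma (s + 1 / 2)
  rw [div_le_iff₀ hG, inv_eq_one_div, div_add_div _ _ ha.ne' hb.ne', div_mul_eq_mul_div,
    le_div_iff₀ (by positivity)]
  have hamgm : 4 * (w ^ 2 * (a * b)) ≤ (b + a * w ^ 2) ^ 2 := by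
    nlinarith [sq_nonneg (b - a * w ^ 2)]
  have hsq : (w * (a * b)) ^ 2 ≤ ((1 * b + a * w ^ 2) * G) ^ 2 :=
    calc (w * (a * b)) ^ 2 = w ^ 2 * (a * b) * (a * b) := by ring
      _ ≤ w ^ 2 * (a * b) * (4 * G ^ 2) :=
        mul_le_mul_of_nonneg_left (by nlinarith [sq_nonneg G]) (by positivity)
      _ = 4 * (w ^ 2 * (a * b)) * G ^ 2 := by ring
      _ ≤ (b + a * w ^ 2) ^ 2 * G ^ 2 := by gcongr
      _ = ((1 * b + a * w ^ 2) * G) ^ 2 := by ring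
  exact (pow_le_pow_iff_left₀ (by positivity) (by positivity) two_ne_zero).mp hsq

/-- For `n ≥ 2` this is an equality, by Legendre's duplication formula. -/
lemma cConst_mul_pow_div_factorial_le {n : ℕ} (hn : 1 ≤ n) {w : ℝ} (hw : 0 ≤ w) :
    cConst n * (√8 * w) ^ n / n ! ≤ 2 * √π * (w ^ n / Gamma ((n + 1) / 2)) := by
  obtain ⟨k, rfl⟩ := Nat.exists_eq_add_of_le' hn
  rcases Nat.eq_zero_or_pos k with rfl | hk
  · have h8 : √8 ≤ 2 * √π := by
      rw [show (2 : ℝ) = √4 by rw [show (4 : ℝ) = 2 ^ 2 by norm_num, sqrt_sq zero_le_two],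
        ← sqrt_mul zero_le_four]
      exact sqrt_le_sqrt (by linarith [pi_gt_three])
    norm_num [cConst]
    nlinarith
  · have hp1 : ((k + 1 : ℕ) : ℝ) ≠ 1 := by norm_cast; omega
    have hpow :
        (2 : ℝ) ^ (-((k + 1 : ℕ) : ℝ) / 2) * 2 ^ (1 - ((k + 1 : ℕ) : ℝ)) * √8 ^ (k + 1) = 2 := by
      have h8 : √8 = (2 : ℝ) ^ (3 / 2 : ℝ) := by
        rw [sqrt_eq_rpow, show (8 : ℝ) = 2 ^ (3 : ℝ) by norm_num, ← rpow_mul zero_le_two]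
        norm_num
      rw [h8, ← rpow_mul_natCast zero_le_two, ← rpow_add two_pos, ← rpow_add two_pos]
      ring_nf
      exact rpow_one 2
    rw [cConst, if_neg hp1, Nat.factorial_succ]
    push_cast at hpow ⊢
    set p : ℝ := (k : ℝ) + 1
    have hdup := Gamma_mul_Gamma_add_half (p / 2)
    rw [show p / 2 + 1 / 2 = (p + 1) / 2 by ring, mul_div_cancel₀ p two_ne_zero,
      Gamma_nat_eq_factorial] at hdup
    have hG := Gamma_pos_of_pos (by positivity : 0 < (p + 1) / 2)
    have hp0 : p ≠ 0 := by positivity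
    apply le_of_eq
    rw [mul_pow]
    generalize Gamma (p / 2) = g at *
    generalize Gamma ((p + 1) / 2) = G at *
    rw [neg_div] at hpow ⊢
    field_simp
    linear_combination (2 ^ (-(p / 2)) * √8 ^ (k + 1) * w ^ (k + 1)) * hdup +
      (w ^ (k + 1) * k ! * √π) * hpow

lemma tsum_ofReal_pow_succ_div_Gamma_le {w : ℝ} (hw : 0 ≤ w) :
    ∑' n : ℕ, ENNReal.ofReal (w ^ (n + 1) / Gamma ((n + 2) / 2)) ≤
      ENNReal.ofReal (3 * w * exp (w ^ 2)) := by
  set a : ℕ → ENNReal := fun k ↦ ENNReal.ofReal (w * (w ^ 2) ^ k / k !)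
  have hsum_a : ∑' k, a k = ENNReal.ofReal (w * exp (w ^ 2)) := by
    have h := (NormedSpace.expSeries_div_hasSum_exp (w ^ 2)).mul_left w
    simp only [← Real.exp_eq_exp_ℝ, ← mul_div_assoc] at h
    rw [← h.tsum_eq, ENNReal.ofReal_tsum_of_nonneg (fun k ↦ by positivity) h.summable]
  have heven (k : ℕ) :
      ENNReal.ofReal (w ^ (2 * k + 1) / Gamma ((((2 * k : ℕ) : ℝ) + 2) / 2)) = a k := by
    congr 1
    rw [show (((2 * k : ℕ) : ℝ) + 2) / 2 = k + 1 by push_cast; ring, Gamma_nat_eq_factorial,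
      pow_succ, pow_mul]
    ring
  have hodd (k : ℕ) :
      ENNReal.ofReal (w ^ (2 * k + 1 + 1) / Gamma ((((2 * k + 1 : ℕ) : ℝ) + 2) / 2)) ≤
        a k + a (k + 1) := by
    rw [← ENNReal.ofReal_add (by positivity) (by positivity)]
    apply ENNReal.ofReal_le_ofReal
    have h := div_Gamma_add_half_le (by linarith [k.cast_nonneg' (α := ℝ)] : 1 ≤ (k : ℝ) + 1) hw
    rw [show (k : ℝ) + 1 + 1 / 2 = (((2 * k + 1 : ℕ) : ℝ) + 2) / 2 by push_cast; ring,
      Gamma_nat_eq_factorial, show (k : ℝ) + 1 + 1 = ((k + 1 : ℕ) : ℝ) + 1 by push_cast; ring,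
      Gamma_nat_eq_factorial] at h
    calc w ^ (2 * k + 1 + 1) / Gamma ((((2 * k + 1 : ℕ) : ℝ) + 2) / 2)
        = w ^ (2 * k + 1) * (w / Gamma ((((2 * k + 1 : ℕ) : ℝ) + 2) / 2)) := by ring
      _ ≤ w ^ (2 * k + 1) * ((k ! : ℝ)⁻¹ + w ^ 2 / (k + 1)!) := by gcongr
      _ = w * (w ^ 2) ^ k / k ! + w * (w ^ 2) ^ (k + 1) / (k + 1)! := by ring
  rw [← tsum_even_add_odd ENNReal.summable ENNReal.summable]
  calc ∑' k : ℕ, ENNReal.ofReal (w ^ (2 * k + 1) / Gamma ((((2 * k : ℕ) : ℝ) + 2) / 2)) +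
        ∑' k : ℕ, ENNReal.ofReal (w ^ (2 * k + 1 + 1) / Gamma ((((2 * k + 1 : ℕ) : ℝ) + 2) / 2))
      ≤ ∑' k, a k + ∑' k, (a k + a (k + 1)) := by
        simp only [heven]
        gcongr with k
        exact hodd k
    _ ≤ ∑' k, a k + (∑' k, a k + ∑' k, a k) := by
        rw [ENNReal.tsum_add]
        gcongr _ + (_ + ?_)
        exact ENNReal.tsum_comp_le_tsum_of_injective (add_left_injective 1) a
    _ = ENNReal.ofReal (3 * w * exp (w ^ 2)) := by
        rw [hsum_a, ← ENNReal.ofReal_add (by positivity) (by positivity),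
          ← ENNReal.ofReal_add (by positivity) (by positivity)]
        ring_nf

section

variable {Ω : Type*} [MeasurableSpace Ω] {μ : Measure Ω} {Z : Ω → ℝ}

lemma measure_ge_le_exp_mul_lintegral_exp (hZ : AEMeasurable Z μ) {τ : ℝ} (hτ : 0 ≤ τ) (t : ℝ) :
    μ {ω | t ≤ Z ω} ≤
      ENNReal.ofReal (exp (-(τ * t))) * ∫⁻ ω, ENNReal.ofReal (exp (τ * Z ω)) ∂μ := by
  have hmarkov := mul_meas_ge_le_lintegral₀ (hZ.const_mul τ).exp.ennreal_ofReal
    (ENNReal.ofReal (exp (τ * t)))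
  calc μ {ω | t ≤ Z ω}
      = ENNReal.ofReal (exp (-(τ * t))) * (ENNReal.ofReal (exp (τ * t)) * μ {ω | t ≤ Z ω}) := by
        rw [← mul_assoc, ← ENNReal.ofReal_mul (exp_pos _).le, ← exp_add, neg_add_cancel, exp_zero,
          ENNReal.ofReal_one, one_mul]
    _ ≤ ENNReal.ofReal (exp (-(τ * t))) * ∫⁻ ω, ENNReal.ofReal (exp (τ * Z ω)) ∂μ := by
        gcongr
        refine le_trans ?_ hmarkov
        gcongr _ * μ ?_
        intro ω (hω : t ≤ Z ω)
        exact ENNReal.ofReal_le_ofReal (exp_le_exp.mpr (mul_le_mul_of_nonneg_left hω hτ))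

lemma lintegral_ofReal_exp_mul_eq_tsum_s12 (hZ : Measurable Z) (hZ0 : ∀ ω, 0 ≤ Z ω) {τ : ℝ}
    (hτ : 0 ≤ τ) :
    ∫⁻ ω, ENNReal.ofReal (exp (τ * Z ω)) ∂μ =
      ∑' n : ℕ, ENNReal.ofReal (τ ^ n / n !) * ∫⁻ ω, ENNReal.ofReal (Z ω ^ n) ∂μ := by
  have hexp (ω : Ω) : ENNReal.ofReal (exp (τ * Z ω)) =
      ∑' n : ℕ, ENNReal.ofReal (τ ^ n / n !) * ENNReal.ofReal (Z ω ^ n) := by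
    have h := NormedSpace.expSeries_div_hasSum_exp (τ * Z ω)
    rw [← Real.exp_eq_exp_ℝ] at h
    have hnn (n : ℕ) : 0 ≤ (τ * Z ω) ^ n / n ! := by have := hZ0 ω; positivity
    rw [← h.tsum_eq, ENNReal.ofReal_tsum_of_nonneg hnn h.summable]
    congr 1 with n
    rw [← ENNReal.ofReal_mul (by positivity), mul_pow]
    ring_nf
  simp_rw [hexp]
  rw [lintegral_tsum fun n ↦ ((hZ.pow_const n).ennreal_ofReal.const_mul _).aemeasurable]
  congr 1 with n
  exact lintegral_const_mul _ (hZ.pow_const n).ennreal_ofReal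

lemma lintegral_exp_mul_le_of_moment_le [IsProbabilityMeasure μ] (hZ : Measurable Z)
    (hZ0 : ∀ ω, 0 ≤ Z ω) {K : ℝ} (hK : 0 ≤ K)
    (hmom : ∀ n : ℕ, 1 ≤ n →
      Integrable (fun ω ↦ Z ω ^ n) μ ∧ ∫ ω, Z ω ^ n ∂μ ≤ cConst n * K ^ n)
    {τ : ℝ} (hτ : 0 ≤ τ) :
    ∫⁻ ω, ENNReal.ofReal (exp (τ * Z ω)) ∂μ ≤
      ENNReal.ofReal (1 + 6 * √π * (τ * K / √8) * exp ((τ * K / √8) ^ 2)) := by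
  set w := τ * K / √8
  have hw : 0 ≤ w := by positivity
  have hterm (n : ℕ) :
      ENNReal.ofReal (τ ^ (n + 1) / (n + 1)!) * ∫⁻ ω, ENNReal.ofReal (Z ω ^ (n + 1)) ∂μ ≤
        ENNReal.ofReal (2 * √π) * ENNReal.ofReal (w ^ (n + 1) / Gamma ((n + 2) / 2)) := by
    obtain ⟨hint, hle⟩ := hmom (n + 1) (by omega)
    rw [← ofReal_integral_eq_lintegral_ofReal hint
        (ae_of_all _ fun ω ↦ by have := hZ0 ω; positivity),
      ← ENNReal.ofReal_mul (by positivity), ← ENNReal.ofReal_mul (by positivity)]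
    apply ENNReal.ofReal_le_ofReal
    have hτK : τ * K = √8 * w := by rw [mul_div_cancel₀ _ (by positivity)]
    calc τ ^ (n + 1) / (n + 1)! * ∫ ω, Z ω ^ (n + 1) ∂μ
        ≤ τ ^ (n + 1) / (n + 1)! * (cConst (n + 1 : ℕ) * K ^ (n + 1)) := by gcongr
      _ = cConst (n + 1 : ℕ) * (√8 * w) ^ (n + 1) / (n + 1)! := by rw [← hτK]; ring
      _ ≤ 2 * √π * (w ^ (n + 1) / Gamma (((n + 1 : ℕ) + 1) / 2)) :=
        cConst_mul_pow_div_factorial_le (by omega) hw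
      _ = 2 * √π * (w ^ (n + 1) / Gamma ((n + 2) / 2)) := by push_cast; ring_nf
  rw [lintegral_ofReal_exp_mul_eq_tsum_s12 hZ hZ0 hτ, tsum_eq_zero_add' ENNReal.summable]
  calc _ ≤ 1 + ENNReal.ofReal (2 * √π) *
        ∑' n : ℕ, ENNReal.ofReal (w ^ (n + 1) / Gamma ((n + 2) / 2)) := by
        rw [← ENNReal.tsum_mul_left]
        refine add_le_add (le_of_eq ?_) (ENNReal.tsum_le_tsum hterm)
        simp
    _ ≤ 1 + ENNReal.ofReal (2 * √π) * ENNReal.ofReal (3 * w * exp (w ^ 2)) := by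
        gcongr
        exact tsum_ofReal_pow_succ_div_Gamma_le hw
    _ = ENNReal.ofReal (1 + 6 * √π * w * exp (w ^ 2)) := by
        rw [← ENNReal.ofReal_mul (by positivity), ← ENNReal.ofReal_one,
          ← ENNReal.ofReal_add zero_le_one (by positivity)]
        ring_nf

end

/-- Chernoff-type tail bound from the proof of Theorem 5: if
`E[Zⁿ] ≤ c(n) Kⁿ` for all `n ≥ 1`, then
`P(Z ≥ ε/2) ≤ (1 + 4√(2π) ε/K) e^{−ε²/(2K²)}`. -/
theorem tail_bound_from_moment_bounds
    {Ω : Type*} [MeasurableSpace Ω] (μ : Measure Ω) [IsProbabilityMeasure μ]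
    (Z : Ω → ℝ) (hZmeas : Measurable Z) (hZnonneg : ∀ ω, 0 ≤ Z ω)
    (K : ℝ) (hK : 0 < K)
    (hmom : ∀ n : ℕ, 1 ≤ n →
      Integrable (fun ω => Z ω ^ n) μ ∧
        (∫ ω, Z ω ^ n ∂μ) ≤ cConst n * K ^ n)
    (ε : ℝ) (hε : 0 < ε) :
    μ {ω | Z ω ≥ ε / 2} ≤
      ENNReal.ofReal ((1 + 4 * Real.sqrt (2 * Real.pi) * ε / K) *
        Real.exp (-ε ^ 2 / (2 * K ^ 2))) := by
  set τ : ℝ := 2 * ε / K ^ 2 with hτ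
  set w : ℝ := τ * K / √8 with hw
  have hw_eq : w = √2 * ε / (2 * K) := by
    have h8 : √8 = 2 * √2 := by
      rw [show (8 : ℝ) = 2 ^ 2 * 2 by norm_num, sqrt_mul (by positivity), sqrt_sq zero_le_two]
    rw [hw, h8, hτ]
    field_simp
    rw [sq_sqrt zero_le_two]
  have hw_sq : w ^ 2 = ε ^ 2 / (2 * K ^ 2) := by
    rw [hw_eq, div_pow, mul_pow, sq_sqrt zero_le_two]; ring
  have hτt : τ * (ε / 2) = 2 * w ^ 2 := by
    rw [hw_sq, hτ]; field_simp
  have hw_le : 6 * √π * w ≤ 4 * √(2 * π) * ε / K := by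
    rw [hw_eq, sqrt_mul zero_le_two]
    have : 0 ≤ √2 * √π * ε / K := by positivity
    linarith [show 6 * √π * (√2 * ε / (2 * K)) = 3 * (√2 * √π * ε / K) by field_simp; ring,
      show 4 * (√2 * √π) * ε / K = 4 * (√2 * √π * ε / K) by ring]
  have hexp : exp (-(2 * w ^ 2)) * exp (w ^ 2) = exp (-w ^ 2) := by rw [← exp_add]; ring_nf
  calc μ {ω | Z ω ≥ ε / 2}
      ≤ ENNReal.ofReal (exp (-(τ * (ε / 2)))) * ∫⁻ ω, ENNReal.ofReal (exp (τ * Z ω)) ∂μ :=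
        measure_ge_le_exp_mul_lintegral_exp hZmeas.aemeasurable (by positivity) _
    _ ≤ ENNReal.ofReal (exp (-(τ * (ε / 2)))) * ENNReal.ofReal (1 + 6 * √π * w * exp (w ^ 2)) := by
        gcongr
        exact lintegral_exp_mul_le_of_moment_le hZmeas hZnonneg hK.le hmom (by positivity)
    _ = ENNReal.ofReal (exp (-(2 * w ^ 2)) + 6 * √π * w * exp (-w ^ 2)) := by
        rw [← ENNReal.ofReal_mul (exp_pos _).le, hτt]
        congr 1
        linear_combination (6 * √π * w) * hexp
    _ ≤ ENNReal.ofReal ((1 + 4 * √(2 * π) * ε / K) * exp (-ε ^ 2 / (2 * K ^ 2))) := by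
        rw [neg_div, ← hw_sq]
        apply ENNReal.ofReal_le_ofReal
        nlinarith [exp_le_exp.mpr (by nlinarith [sq_nonneg w] : -(2 * w ^ 2) ≤ -w ^ 2),
          mul_le_mul_of_nonneg_right hw_le (exp_pos (-w ^ 2)).le]
end
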